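/- Let λ = √2 + 1 and define P₀, Q₀ : ℝ → ℂ by P₀(ξ) = 2πiξ − λ(e^{πiξ/√2} − 1) − λ^{-1}(1 − e^{−πiξ/√2}) and Q₀(ξ) = −λ(πi/√2)(e^{πiξ/√2} − 1) + λ^{-1}(πi/√2)(1 − e^{−πiξ/√2}). Then: (i) there exist δ > 0 and C > 0 such that |P₀(ξ) − π²ξ²/2| ≤ C|ξ|³ and |Q₀(ξ) − π²ξ| ≤ C|ξ|² for all |ξ| < δ; (ii) P₀(ξ) ≠ 0 for every real ξ ≠ 0. -/

import Mathlib

noncomputable section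

/-- The Bäcklund parameter λ = √2 + 1. -/
def lam : ℂ := ((Real.sqrt 2 + 1 : ℝ) : ℂ)

/-- P₀(ξ) = 2πiξ − λ(e^{πiξ/√2} − 1) − λ⁻¹(1 − e^{−πiξ/√2}). -/
def P0 (ξ : ℝ) : ℂ :=
  2 * (Real.pi : ℂ) * Complex.I * (ξ : ℂ)
  - lam * (Complex.exp ((Real.pi : ℂ) * Complex.I * (ξ : ℂ) / (Real.sqrt 2 : ℂ)) - 1)
  - lam⁻¹ * (1 - Complex.exp (-((Real.pi : ℂ) * Complex.I * (ξ : ℂ) / (Real.sqrt 2 : ℂ))))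

/-- Q₀(ξ) = −λ(πi/√2)(e^{πiξ/√2} − 1) + λ⁻¹(πi/√2)(1 − e^{−πiξ/√2}). -/
def Q0 (ξ : ℝ) : ℂ :=
  -lam * ((Real.pi : ℂ) * Complex.I / (Real.sqrt 2 : ℂ))
     * (Complex.exp ((Real.pi : ℂ) * Complex.I * (ξ : ℂ) / (Real.sqrt 2 : ℂ)) - 1)
  + lam⁻¹ * ((Real.pi : ℂ) * Complex.I / (Real.sqrt 2 : ℂ))
     * (1 - Complex.exp (-((Real.pi : ℂ) * Complex.I * (ξ : ℂ) / (Real.sqrt 2 : ℂ))))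

/-! With `w = πiξ/√2`, the identities `λ + λ⁻¹ = 2√2` and `λ - λ⁻¹ = 2` make the terms of order
`< 3` (for `P₀`) and `< 2` (for `Q₀`) of the Taylor expansions of `e^{±w}` cancel against the
polynomial parts, so that `P₀(ξ) - π²ξ²/2` and `Q₀(ξ) - π²ξ` are combinations of Taylor remainders
of `e^{±w}` with coefficients `λ`, `λ⁻¹`. As `λ, λ⁻¹ > 0` the sum of their norms is again `2√2`,
which makes `C = π³` work for `|ξ| < √2/π`. For real `ξ` and `t = πξ/√2` one has
`Im P₀(ξ) = 2√2 (t - sin t)`, which vanishes only at `t = 0` because `|sin t| < |t|` otherwise. -/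

namespace Complex

theorem norm_exp_sub_one_sub_id_sub_sq_div_two_le {x : ℂ} (hx : ‖x‖ ≤ 1) :
    ‖exp x - 1 - x - x ^ 2 / 2‖ ≤ ‖x‖ ^ 3 :=
  calc
    ‖exp x - 1 - x - x ^ 2 / 2‖ = ‖exp x - ∑ m ∈ Finset.range 3, x ^ m / m.factorial‖ := by
      congr 1
      simp only [Finset.sum_range_succ, Finset.sum_range_zero, Nat.factorial]
      push_cast
      ring
    _ ≤ ‖x‖ ^ 3 * ((Nat.succ 3 : ℝ) * (Nat.factorial 3 * (3 : ℕ) : ℝ)⁻¹) :=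
      exp_bound hx (by decide)
    _ ≤ ‖x‖ ^ 3 * 1 := by gcongr; norm_num [Nat.factorial]
    _ = ‖x‖ ^ 3 := mul_one _

variable (a b : ℂ) {w : ℂ}

theorem norm_exp_combination_sub_quadratic_le (hw : ‖w‖ ≤ 1) :
    ‖a * (exp w - 1) + b * (1 - exp (-w)) - ((a + b) * w + (a - b) * w ^ 2 / 2)‖
      ≤ (‖a‖ + ‖b‖) * ‖w‖ ^ 3 := by
  have hw' : ‖-w‖ ≤ 1 := by rwa [norm_neg]
  calc
    _ = ‖a * (exp w - 1 - w - w ^ 2 / 2) - b * (exp (-w) - 1 - (-w) - (-w) ^ 2 / 2)‖ := by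
      congr 1; ring
    _ ≤ ‖a‖ * ‖w‖ ^ 3 + ‖b‖ * ‖w‖ ^ 3 := by
      refine (norm_sub_le _ _).trans ?_
      rw [norm_mul, norm_mul]
      gcongr
      · exact norm_exp_sub_one_sub_id_sub_sq_div_two_le hw
      · simpa using norm_exp_sub_one_sub_id_sub_sq_div_two_le hw'
    _ = (‖a‖ + ‖b‖) * ‖w‖ ^ 3 := by ring

theorem norm_exp_combination_sub_linear_le (hw : ‖w‖ ≤ 1) :
    ‖a * (exp w - 1) - b * (1 - exp (-w)) - (a - b) * w‖ ≤ (‖a‖ + ‖b‖) * ‖w‖ ^ 2 := by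
  have hw' : ‖-w‖ ≤ 1 := by rwa [norm_neg]
  calc
    _ = ‖a * (exp w - 1 - w) + b * (exp (-w) - 1 - (-w))‖ := by congr 1; ring
    _ ≤ ‖a‖ * ‖w‖ ^ 2 + ‖b‖ * ‖w‖ ^ 2 := by
      refine (norm_add_le _ _).trans ?_
      rw [norm_mul, norm_mul]
      gcongr
      · exact norm_exp_sub_one_sub_id_le hw
      · simpa using norm_exp_sub_one_sub_id_le hw'
    _ = (‖a‖ + ‖b‖) * ‖w‖ ^ 2 := by ring

end Complex

open Complex

lemma ofReal_sqrt_two_sq : ((√2 : ℝ) : ℂ) ^ 2 = 2 := by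
  exact_mod_cast Real.sq_sqrt zero_le_two

lemma lam_inv : lam⁻¹ = ((√2 - 1 : ℝ) : ℂ) := by
  refine inv_eq_of_mul_eq_one_right ?_
  simp only [lam]
  push_cast
  linear_combination ofReal_sqrt_two_sq

lemma lam_add_lam_inv : lam + lam⁻¹ = 2 * ((√2 : ℝ) : ℂ) := by
  rw [lam_inv, lam]; push_cast; ring

lemma lam_sub_lam_inv : lam - lam⁻¹ = 2 := by
  rw [lam_inv, lam]; push_cast; ring

lemma norm_lam_add_norm_lam_inv : ‖lam‖ + ‖lam⁻¹‖ = 2 * √2 := by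
  have h1 : (1 : ℝ) ≤ √2 := Real.one_le_sqrt.mpr one_le_two
  rw [lam_inv, lam, norm_real, norm_real, Real.norm_of_nonneg (by positivity),
    Real.norm_of_nonneg (by linarith)]
  ring

def phase (ξ : ℝ) : ℂ := (Real.pi : ℂ) * I * (ξ : ℂ) / ((√2 : ℝ) : ℂ)

lemma norm_phase (ξ : ℝ) : ‖phase ξ‖ = Real.pi * |ξ| / √2 := by
  simp [phase, abs_of_pos Real.pi_pos, abs_of_nonneg (Real.sqrt_nonneg 2)]

lemma sq_phase (ξ : ℝ) : phase ξ ^ 2 = -((Real.pi : ℂ) ^ 2 * (ξ : ℂ) ^ 2 / 2) := by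
  rw [phase, div_pow, ofReal_sqrt_two_sq]
  linear_combination (Real.pi : ℂ) ^ 2 * (ξ : ℂ) ^ 2 / 2 * I_sq

lemma two_mul_sqrt_two_mul_phase (ξ : ℝ) :
    2 * ((√2 : ℝ) : ℂ) * phase ξ = 2 * (Real.pi : ℂ) * I * (ξ : ℂ) := by
  have hs : ((√2 : ℝ) : ℂ) ≠ 0 := by simp
  rw [phase]
  field_simp

lemma P0_sub_eq (ξ : ℝ) :
    P0 ξ - (Real.pi : ℂ) ^ 2 * (ξ : ℂ) ^ 2 / 2 =
      -(lam * (exp (phase ξ) - 1) + lam⁻¹ * (1 - exp (-phase ξ))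
        - ((lam + lam⁻¹) * phase ξ + (lam - lam⁻¹) * phase ξ ^ 2 / 2)) := by
  have hP : P0 ξ = 2 * (Real.pi : ℂ) * I * (ξ : ℂ)
      - lam * (exp (phase ξ) - 1) - lam⁻¹ * (1 - exp (-phase ξ)) := rfl
  rw [hP, lam_add_lam_inv, lam_sub_lam_inv]
  linear_combination -two_mul_sqrt_two_mul_phase ξ - sq_phase ξ

lemma Q0_sub_eq (ξ : ℝ) :
    Q0 ξ - (Real.pi : ℂ) ^ 2 * (ξ : ℂ) =
      -((Real.pi : ℂ) * I / ((√2 : ℝ) : ℂ)) * (lam * (exp (phase ξ) - 1)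
        - lam⁻¹ * (1 - exp (-phase ξ)) - (lam - lam⁻¹) * phase ξ) := by
  have hQ : Q0 ξ = -lam * ((Real.pi : ℂ) * I / ((√2 : ℝ) : ℂ)) * (exp (phase ξ) - 1)
      + lam⁻¹ * ((Real.pi : ℂ) * I / ((√2 : ℝ) : ℂ)) * (1 - exp (-phase ξ)) := rfl
  have hs : ((√2 : ℝ) : ℂ) ≠ 0 := by simp
  rw [hQ, lam_sub_lam_inv, phase]
  field_simp
  linear_combination -(Real.pi : ℂ) * ξ * ofReal_sqrt_two_sq - 2 * (Real.pi : ℂ) * ξ * I_sq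

lemma norm_P0_sub_le {ξ : ℝ} (hξ : Real.pi * |ξ| ≤ √2) :
    ‖P0 ξ - (Real.pi : ℂ) ^ 2 * (ξ : ℂ) ^ 2 / 2‖ ≤ Real.pi ^ 3 * |ξ| ^ 3 := by
  have hw : ‖phase ξ‖ ≤ 1 := by rwa [norm_phase, div_le_one (by positivity)]
  calc
    _ ≤ (‖lam‖ + ‖lam⁻¹‖) * ‖phase ξ‖ ^ 3 := by
      rw [P0_sub_eq, norm_neg]
      exact norm_exp_combination_sub_quadratic_le _ _ hw
    _ = Real.pi ^ 3 * |ξ| ^ 3 := by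
      rw [norm_lam_add_norm_lam_inv, norm_phase, div_pow]
      field_simp
      rw [Real.sq_sqrt zero_le_two]

lemma norm_Q0_sub_le {ξ : ℝ} (hξ : Real.pi * |ξ| ≤ √2) :
    ‖Q0 ξ - (Real.pi : ℂ) ^ 2 * (ξ : ℂ)‖ ≤ Real.pi ^ 3 * |ξ| ^ 2 := by
  have hw : ‖phase ξ‖ ≤ 1 := by rwa [norm_phase, div_le_one (by positivity)]
  calc
    _ ≤ Real.pi / √2 * ((‖lam‖ + ‖lam⁻¹‖) * ‖phase ξ‖ ^ 2) := by
      rw [Q0_sub_eq, norm_mul, norm_neg]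
      gcongr
      · simp [abs_of_pos Real.pi_pos, abs_of_nonneg (Real.sqrt_nonneg 2)]
      · exact norm_exp_combination_sub_linear_le _ _ hw
    _ = Real.pi ^ 3 * |ξ| ^ 2 := by
      rw [norm_lam_add_norm_lam_inv, norm_phase, div_pow]
      field_simp
      rw [Real.sq_sqrt zero_le_two]

lemma phase_eq_ofReal_mul_I (ξ : ℝ) : phase ξ = ((Real.pi * ξ / √2 : ℝ) : ℂ) * I := by
  rw [phase]; push_cast; ring

lemma im_P0 (ξ : ℝ) :
    (P0 ξ).im = 2 * √2 * (Real.pi * ξ / √2 - Real.sin (Real.pi * ξ / √2)) := by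
  have hP : P0 ξ = 2 * ((√2 : ℝ) : ℂ) * phase ξ
      - lam * (exp (phase ξ) - 1) - lam⁻¹ * (1 - exp (-phase ξ)) := by
    rw [two_mul_sqrt_two_mul_phase]; rfl
  rw [hP, phase_eq_ofReal_mul_I, lam_inv, lam, ← neg_mul, ← ofReal_neg]
  simp only [sub_im, sub_re, mul_im, mul_re, ofReal_re, ofReal_im, one_re, one_im, re_ofNat,
    im_ofNat, exp_ofReal_mul_I_re, exp_ofReal_mul_I_im, I_re, I_im, Real.sin_neg]
  ring

lemma P0_ne_zero {ξ : ℝ} (hξ : ξ ≠ 0) : P0 ξ ≠ 0 := by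
  have ht : Real.pi * ξ / √2 ≠ 0 := by positivity
  have hsin : Real.sin (Real.pi * ξ / √2) ≠ Real.pi * ξ / √2 := fun h ↦
    (Real.abs_sin_lt_abs ht).ne (congrArg abs h)
  intro h0
  have him := congrArg im h0
  rw [im_P0, zero_im, mul_eq_zero, sub_eq_zero] at him
  rcases him with h | h
  · exact absurd h (by positivity)
  · exact hsin h.symm

end

/-- Asymptotics of P₀ and Q₀ near 0, and nonvanishing of P₀ away from 0. -/
theorem P0_Q0_asymptotics :
    (∃ δ > (0:ℝ), ∃ C > (0:ℝ), ∀ ξ : ℝ, |ξ| < δ →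
      ‖P0 ξ - (Real.pi : ℂ)^2 * (ξ : ℂ)^2 / 2‖ ≤ C * |ξ|^3 ∧
      ‖Q0 ξ - (Real.pi : ℂ)^2 * (ξ : ℂ)‖ ≤ C * |ξ|^2) ∧
    (∀ ξ : ℝ, ξ ≠ 0 → P0 ξ ≠ 0) := by
  refine ⟨⟨√2 / Real.pi, by positivity, Real.pi ^ 3, by positivity, fun ξ hξ ↦ ?_⟩,
    fun _ ↦ P0_ne_zero⟩
  have hξ' : Real.pi * |ξ| ≤ √2 := by
    rw [lt_div_iff₀ Real.pi_pos] at hξ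
    linarith
  exact ⟨norm_P0_sub_le hξ', norm_Q0_sub_le hξ'⟩
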